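/- Semantic correctness of Algorithm 4 (reachability task under a safety environment specification): let T₁ be a set of nonempty finite words over A × B, let M₂ be a DFA over A × B with finite state type and accepting set F₂, let T₂ be the set of nonempty finite words accepted by M₂, and define EnvWinsFrom(q) to hold iff there exists an environment strategy σenv such that for every agent strategy σag and every k ≥ 1, M₂.evalFrom q (play(σag, σenv)_{<k}) ∈ F₂. Then the following are equivalent: (i) there exists an agent strategy enforcing Reach T₁ under the environment specification Safe T₂; (ii) there exists an agent strategy σag such that for every σenv, writing π = play(σag, σenv) and run₂(k) = M₂.eval(π_{<k}), there exists k ≥ 0 with: ¬EnvWinsFrom(run₂(k)), or (k ≥ 1 and run₂(k) ∉ F₂), or (k ≥ 1 and π_{<k} ∈ T₁). -/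

import Mathlib

/-- The first `k` letters of an infinite trace. -/
def pre {α : Type} (π : ℕ → α) (k : ℕ) : List α := (List.range k).map π

/-- The finite history of pairs of moves after `k` rounds. -/
def playPrefix {A B : Type} (σag : List B → A) (σenv : List A → B) : ℕ → List (A × B)
  | 0 => []
  | k + 1 =>
      let h := playPrefix σag σenv k
      let a := σag (h.map Prod.snd)
      let b := σenv (h.map Prod.fst ++ [a])
      h ++ [(a, b)]

/-- The infinite play generated by an agent strategy `σag : List B → A`
(the agent moves first) and an environment strategy `σenv : List A → B`:
`a₀ = σag []`, `b₀ = σenv [a₀]`, `a_{i+1} = σag [b₀, …, b_i]`,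
`b_{i+1} = σenv [a₀, …, a_{i+1}]`, and `play σag σenv i = (a_i, b_i)`. -/
def play {A B : Type} (σag : List B → A) (σenv : List A → B) (i : ℕ) : A × B :=
  let h := playPrefix σag σenv i
  let a := σag (h.map Prod.snd)
  let b := σenv (h.map Prod.fst ++ [a])
  (a, b)

/-- Reachability property: some nonempty finite prefix is in `T`. -/
def Reach {A B : Type} (T : Set (List (A × B))) : Set (ℕ → A × B) :=
  {π | ∃ k, 1 ≤ k ∧ pre π k ∈ T}

/-- Safety property: every nonempty finite prefix is in `T`. -/
def Safe {A B : Type} (T : Set (List (A × B))) : Set (ℕ → A × B) :=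
  {π | ∀ k, 1 ≤ k → pre π k ∈ T}

/-- The agent strategy `σag` enforces the property `P`. -/
def AgentEnforces {A B : Type} (σag : List B → A) (P : Set (ℕ → A × B)) : Prop :=
  ∀ σenv : List A → B, play σag σenv ∈ P

/-- The environment strategy `σenv` enforces the property `P`. -/
def EnvEnforces {A B : Type} (σenv : List A → B) (P : Set (ℕ → A × B)) : Prop :=
  ∀ σag : List B → A, play σag σenv ∈ P

/-- The agent strategy `σag` enforces `Task` under the environment
specification `Env`. -/
def EnforcesUnder {A B : Type} (σag : List B → A) (Task Env : Set (ℕ → A × B)) : Prop :=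
  ∀ σenv : List A → B, EnvEnforces σenv Env → play σag σenv ∈ Task

/-- `EnvWinsSafeFrom M q` : the environment has a strategy ensuring that,
starting the run of `M` from state `q`, every state reached after `k ≥ 1`
letters of the play lies in `M.accept`. -/
def EnvWinsSafeFrom {A B Q : Type} (M : DFA (A × B) Q) (q : Q) : Prop :=
  ∃ σenv : List A → B, ∀ σag : List B → A, ∀ k, 1 ≤ k →
    M.evalFrom q (pre (play σag σenv) k) ∈ M.accept

/-!
(ii) ⇒ (i): against an environment strategy enforcing `Safe T₂`, the run of `M₂` stays in
`F₂`, and it also stays in the environment's winning region, because after any prefix the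
residual of that strategy is still winning (splice the agent's first moves in front of any
agent strategy). So only the third disjunct can hold.

(i) ⇒ (ii): if some `σenv` keeps the run inside the winning region and `F₂` while avoiding
`T₁`, let the environment follow `σenv` as long as the agent moves as `σag` does, and switch
to a winning strategy from the current state at the agent's first deviation. This strategy
enforces `Safe T₂` and produces the same play against `σag`.
-/

section Prefix
variable {α : Type}

theorem length_pre (π : ℕ → α) (k : ℕ) : (pre π k).length = k := by
  simp [pre]

theorem getElem?_pre {π : ℕ → α} {k i : ℕ} (h : i < k) : (pre π k)[i]? = some (π i) := by
  simp [pre, List.getElem?_range h]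

theorem pre_succ (π : ℕ → α) (k : ℕ) : pre π (k + 1) = pre π k ++ [π k] := by
  simp [pre, List.range_succ]

theorem pre_succ_eq_cons (π : ℕ → α) (k : ℕ) :
    pre π (k + 1) = π 0 :: pre (fun i => π (i + 1)) k := by
  simp [pre, List.range_succ_eq_map]

theorem pre_add (π : ℕ → α) (k m : ℕ) :
    pre π (k + m) = pre π k ++ pre (fun i => π (k + i)) m := by
  simp [pre, List.range_add]

theorem map_pre {β : Type} (f : α → β) (π : ℕ → α) (k : ℕ) :
    (pre π k).map f = pre (fun i => f (π i)) k := by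
  simp [pre]

theorem pre_congr {π π' : ℕ → α} {n : ℕ} (h : ∀ i < n, π i = π' i) : pre π n = pre π' n :=
  List.map_congr_left fun i hi => h i (List.mem_range.1 hi)

end Prefix

section Play
variable {A B : Type}

def IsConsistentAt (σag : List B → A) (σenv : List A → B) (π : ℕ → A × B) (i : ℕ) : Prop :=
  (π i).1 = σag ((pre π i).map Prod.snd) ∧ (π i).2 = σenv ((pre π (i + 1)).map Prod.fst)

theorem pre_play (σag : List B → A) (σenv : List A → B) :
    ∀ k, pre (play σag σenv) k = playPrefix σag σenv k
  | 0 => rfl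
  | k + 1 => by rw [pre_succ, pre_play σag σenv k]; rfl

theorem isConsistentAt_play (σag : List B → A) (σenv : List A → B) (i : ℕ) :
    IsConsistentAt σag σenv (play σag σenv) i := by
  refine ⟨by rw [pre_play]; rfl, ?_⟩
  rw [pre_play]
  simp [playPrefix, play]

theorem pre_eq_pre_play {σag : List B → A} {σenv : List A → B} {π : ℕ → A × B} :
    ∀ {n}, (∀ i < n, IsConsistentAt σag σenv π i) → pre π n = pre (play σag σenv) n
  | 0, _ => rfl
  | n + 1, h => by
    have hpre : pre π n = pre (play σag σenv) n := pre_eq_pre_play fun i hi => h i (by omega)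
    obtain ⟨hfst, hsnd⟩ := h n (by omega)
    obtain ⟨hfst', hsnd'⟩ := isConsistentAt_play σag σenv n
    have hfst_eq : (π n).1 = (play σag σenv n).1 := by rw [hfst, hfst', hpre]
    have hsnd_eq : (π n).2 = (play σag σenv n).2 := by
      rw [hsnd, hsnd', pre_succ, pre_succ, List.map_append, List.map_append, hpre]
      simp [hfst_eq]
    rw [pre_succ, pre_succ, hpre, Prod.ext hfst_eq hsnd_eq]

theorem eq_play {σag : List B → A} {σenv : List A → B} {π : ℕ → A × B}
    (h : ∀ i, IsConsistentAt σag σenv π i) : π = play σag σenv := by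
  funext i
  have := congrArg (·[i]?) (pre_eq_pre_play (n := i + 1) fun j _ => h j)
  simpa [getElem?_pre] using this

theorem pre_play_add {σag σag' : List B → A} {σenv σenv' : List A → B} {k : ℕ}
    (hag : ∀ t, σag ((pre (play σag σenv) k).map Prod.snd ++ t) = σag' t)
    (henv : ∀ s, σenv ((pre (play σag σenv) k).map Prod.fst ++ σag' [] :: s) =
      σenv' (σag' [] :: s))
    (m : ℕ) :
    pre (play σag σenv) (k + m) = pre (play σag σenv) k ++ pre (play σag' σenv') m := by
  have hfst : ∀ i, (play σag σenv (k + i)).1 =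
      σag' ((pre (fun j => play σag σenv (k + j)) i).map Prod.snd) := by
    intro i
    rw [(isConsistentAt_play σag σenv (k + i)).1, pre_add, List.map_append, hag]
  have hstart : (play σag σenv k).1 = σag' [] := hfst 0
  have hcons : ∀ i, IsConsistentAt σag' σenv' (fun j => play σag σenv (k + j)) i := by
    refine fun i => ⟨hfst i, ?_⟩
    rw [(isConsistentAt_play σag σenv (k + i)).2, add_assoc, pre_add, List.map_append,
      pre_succ_eq_cons, List.map_cons, add_zero, hstart]
    exact henv _
  rw [pre_add, eq_play hcons]

end Play

section Safety
variable {A B Q : Type} {M : DFA (A × B) Q}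

theorem mem_safe_accepts_iff {π : ℕ → A × B} :
    π ∈ Safe {w | w ≠ [] ∧ w ∈ M.accepts} ↔ ∀ k, 1 ≤ k → M.eval (pre π k) ∈ M.accept := by
  refine forall₂_congr fun k hk => and_iff_right_of_imp fun _ hnil => ?_
  have := congrArg List.length hnil
  simp only [length_pre, List.length_nil] at this
  omega

theorem envWinsSafeFrom_eval_pre_play {σenv : List A → B}
    (hσenv : EnvEnforces σenv (Safe {w | w ≠ [] ∧ w ∈ M.accepts}))
    (σag : List B → A) (n : ℕ) : EnvWinsSafeFrom M (M.eval (pre (play σag σenv) n)) := by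
  set P := pre (play σag σenv) n
  refine ⟨fun s => σenv (P.map Prod.fst ++ s), fun σag' m hm => ?_⟩
  let σagC : List B → A := fun t => if t.length < n then σag t else σag' (t.drop n)
  have hP : pre (play σagC σenv) n = P := by
    refine (pre_eq_pre_play fun i hi => ⟨?_, (isConsistentAt_play σag σenv i).2⟩).symm
    rw [(isConsistentAt_play σag σenv i).1]
    simp [σagC, length_pre, hi]
  have hag : ∀ t, σagC ((pre (play σagC σenv) n).map Prod.snd ++ t) = σag' t := by
    intro t
    simp [σagC, hP, P, length_pre, List.drop_left']
  have hsplit := pre_play_add (σenv' := fun s => σenv (P.map Prod.fst ++ s)) hag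
    (fun s => by rw [hP]) m
  have hacc := mem_safe_accepts_iff.1 (hσenv σagC) (n + m) (by omega)
  rwa [hsplit, hP, DFA.eval, DFA.evalFrom_of_append] at hacc

end Safety

section Deviation
variable {A B Q : Type}

open Classical in
noncomputable def deviationEnv (a : ℕ → A) (σenv : List A → B) (τ : ℕ → List A → B)
    (s : List A) : B :=
  if h : ∃ i, i < s.length ∧ s[i]? ≠ some (a i) then τ (Nat.find h) (s.drop (Nat.find h))
  else σenv s

theorem deviationEnv_pre (a : ℕ → A) (σenv : List A → B) (τ : ℕ → List A → B) (m : ℕ) :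
    deviationEnv a σenv τ (pre a m) = σenv (pre a m) := by
  classical
  rw [deviationEnv, dif_neg]
  rintro ⟨i, hi, hne⟩
  rw [length_pre] at hi
  exact hne (getElem?_pre hi)

theorem deviationEnv_pre_append {a : ℕ → A} {j : ℕ} {x : A} (hx : x ≠ a j)
    (σenv : List A → B) (τ : ℕ → List A → B) (s : List A) :
    deviationEnv a σenv τ (pre a j ++ x :: s) = τ j (x :: s) := by
  classical
  have hj : j < (pre a j ++ x :: s).length ∧ (pre a j ++ x :: s)[j]? ≠ some (a j) := by
    simp [length_pre, hx]
  have h : ∃ i, i < (pre a j ++ x :: s).length ∧ (pre a j ++ x :: s)[i]? ≠ some (a i) := ⟨j, hj⟩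
  have hfind : Nat.find h = j := by
    refine (Nat.find_eq_iff h).2 ⟨hj, fun i hij ⟨_, hne⟩ => hne ?_⟩
    rw [List.getElem?_append_left (by rw [length_pre]; exact hij), getElem?_pre hij]
  rw [deviationEnv, dif_pos h, hfind, List.drop_left' (length_pre a j)]

theorem play_deviationEnv_self (σag : List B → A) (σenv : List A → B) (τ : ℕ → List A → B) :
    play σag (deviationEnv (fun i => (play σag σenv i).1) σenv τ) = play σag σenv := by
  refine (eq_play fun i => ⟨(isConsistentAt_play σag σenv i).1, ?_⟩).symm
  rw [(isConsistentAt_play σag σenv i).2, map_pre, deviationEnv_pre]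

theorem pre_play_deviationEnv_of_agree {σag σag' : List B → A} {σenv : List A → B}
    {τ : ℕ → List A → B} {n : ℕ}
    (h : ∀ i < n, (play σag' (deviationEnv (fun i => (play σag σenv i).1) σenv τ) i).1 =
      (play σag σenv i).1) :
    pre (play σag' (deviationEnv (fun i => (play σag σenv i).1) σenv τ)) n =
      pre (play σag σenv) n := by
  refine pre_congr fun i hi => Prod.ext (h i hi) ?_
  rw [(isConsistentAt_play σag' _ i).2, map_pre, pre_congr fun j hj => h j (by omega),
    (isConsistentAt_play σag σenv i).2, map_pre, deviationEnv_pre]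

theorem exists_envEnforces_safe_play_eq {M : DFA (A × B) Q} (σag : List B → A)
    (σenv : List A → B) (hwin : ∀ k, EnvWinsSafeFrom M (M.eval (pre (play σag σenv) k)))
    (hacc : ∀ k, 1 ≤ k → M.eval (pre (play σag σenv) k) ∈ M.accept) :
    ∃ σenv', EnvEnforces σenv' (Safe {w | w ≠ [] ∧ w ∈ M.accepts}) ∧
      play σag σenv' = play σag σenv := by
  choose τ hτ using hwin
  set σenv' := deviationEnv (fun i => (play σag σenv i).1) σenv τ
  refine ⟨σenv', fun σag' => mem_safe_accepts_iff.2 fun k hk => ?_, play_deviationEnv_self ..⟩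
  by_cases hdev : ∃ j < k, (play σag' σenv' j).1 ≠ (play σag σenv j).1
  · classical
    set j := Nat.find hdev
    obtain ⟨hjk, hjdev⟩ := Nat.find_spec hdev
    have hpre : pre (play σag' σenv') j = pre (play σag σenv) j :=
      pre_play_deviationEnv_of_agree fun i hi => by
        simpa [show i < k by omega] using Nat.find_min hdev hi
    let σagS : List B → A := fun t => σag' ((pre (play σag' σenv') j).map Prod.snd ++ t)
    have hdevj : σagS [] ≠ (play σag σenv j).1 := by
      simpa [σagS, ← (isConsistentAt_play σag' _ j).1] using hjdev
    have hsplit := pre_play_add (σag' := σagS) (σenv' := τ j) (fun t => rfl)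
      (fun s => by rw [hpre, map_pre]; exact deviationEnv_pre_append hdevj σenv τ s) (k - j)
    rw [show k = j + (k - j) by omega, hsplit, DFA.eval, DFA.evalFrom_of_append, hpre]
    exact hτ j σagS (k - j) (by omega)
  · push Not at hdev
    rw [pre_play_deviationEnv_of_agree hdev]
    exact hacc k hk

end Deviation

theorem alg4_correctness_general {A B Q₂ : Type}
    (T₁ : Set (List (A × B))) (M₂ : DFA (A × B) Q₂)
    (T₂ : Set (List (A × B))) (hT₂ : T₂ = {w | w ≠ [] ∧ w ∈ M₂.accepts}) :
    (∃ σag : List B → A, EnforcesUnder σag (Reach T₁) (Safe T₂)) ↔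
      (∃ σag : List B → A, ∀ σenv : List A → B, ∃ k : ℕ,
        ¬ EnvWinsSafeFrom M₂ (M₂.eval (pre (play σag σenv) k)) ∨
        (1 ≤ k ∧ M₂.eval (pre (play σag σenv) k) ∉ M₂.accept) ∨
        (1 ≤ k ∧ pre (play σag σenv) k ∈ T₁)) := by
  subst hT₂
  constructor
  · rintro ⟨σag, hσag⟩
    refine ⟨σag, fun σenv => ?_⟩
    by_contra! h
    obtain ⟨σenv', hsafe, hplay⟩ := exists_envEnforces_safe_play_eq σag σenv
      (fun k => (h k).1) (fun k => (h k).2.1)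
    obtain ⟨k, hk, hT₁⟩ := hσag σenv' hsafe
    exact (h k).2.2 hk (hplay ▸ hT₁)
  · rintro ⟨σag, hσag⟩
    refine ⟨σag, fun σenv hσenv => ?_⟩
    obtain ⟨k, hlose | ⟨hk, hrej⟩ | hT₁⟩ := hσag σenv
    · exact absurd (envWinsSafeFrom_eval_pre_play hσenv σag k) hlose
    · exact absurd (mem_safe_accepts_iff.1 (hσenv σag) k hk) hrej
    · exact ⟨k, hT₁⟩

/-- Semantic correctness of Algorithm 4 (reachability task under a safety
environment specification): the agent can enforce `Reach T₁` under `Safe T₂`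
iff it has a strategy such that against every environment strategy, at some
time the run of `M₂` leaves the environment's safety winning region, or leaves
`M₂.accept` (at a time `k ≥ 1`), or the prefix of the play reaches `T₁`. -/
theorem alg4_correctness {A B Q₂ : Type}
    [Fintype A] [Fintype B] [Nonempty A] [Nonempty B] [Fintype Q₂]
    (T₁ : Set (List (A × B))) (M₂ : DFA (A × B) Q₂)
    (T₂ : Set (List (A × B))) (hT₂ : T₂ = {w | w ≠ [] ∧ w ∈ M₂.accepts}) :
    (∃ σag : List B → A, EnforcesUnder σag (Reach T₁) (Safe T₂)) ↔
      (∃ σag : List B → A, ∀ σenv : List A → B, ∃ k : ℕ,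
        ¬ EnvWinsSafeFrom M₂ (M₂.eval (pre (play σag σenv) k)) ∨
        (1 ≤ k ∧ M₂.eval (pre (play σag σenv) k) ∉ M₂.accept) ∨
        (1 ≤ k ∧ pre (play σag σenv) k ∈ T₁)) :=
  alg4_correctness_general T₁ M₂ T₂ hT₂
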